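/- For a linearly ordered field F, the Cut Axiom (CA) holds in F if and only if the Lebesgue Measure Property (LMP) holds in F. -/

import Mathlib

namespace Littlewood

variable {F : Type*} [Field F] [LinearOrder F] [IsStrictOrderedRing F]

/-- A sequence `s` in `F` converges to `L`. -/
def SeqConv (s : ℕ → F) (L : F) : Prop :=
  ∀ ε : F, 0 < ε → ∃ N : ℕ, ∀ n, N ≤ n → s n - L ∈ Set.Ioo (-ε) ε

/-- `φ` is a step function on `[a,b]`: there is a partition
`a = x 0 < x 1 < ⋯ < x n = b` such that `φ` is constant on each open subinterval. -/
def IsStepOn (a b : F) (φ : F → F) : Prop :=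
  ∃ (n : ℕ) (x : ℕ → F), x 0 = a ∧ x n = b ∧ (∀ i < n, x i < x (i + 1)) ∧
    ∀ i < n, ∃ M : F, ∀ t ∈ Set.Ioo (x i) (x (i + 1)), φ t = M

/-- `I` is the integral of the step function `φ` over `[a,b]`, computed from
an admissible partition `a = x 0 < ⋯ < x n = b` with constant values `M i`. -/
def HasStepIntegral (a b : F) (φ : F → F) (I : F) : Prop :=
  ∃ (n : ℕ) (x : ℕ → F) (M : ℕ → F), x 0 = a ∧ x n = b ∧ (∀ i < n, x i < x (i + 1)) ∧
    (∀ i < n, ∀ t ∈ Set.Ioo (x i) (x (i + 1)), φ t = M i) ∧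
    I = ∑ i ∈ Finset.range n, M i * (x (i + 1) - x i)

/-- `S ⊆ [a,b]` has measure zero: for every `ε > 0` there is a countable family of
open intervals `(c n, d n) ⊆ [a,b]` covering `S` whose partial sums of lengths
converge to a sum less than `ε`. -/
def NullSet (a b : F) (S : Set F) : Prop :=
  ∀ ε : F, 0 < ε → ∃ c d : ℕ → F,
    (∀ n, c n ≤ d n ∧ Set.Ioo (c n) (d n) ⊆ Set.Icc a b) ∧
    S ⊆ (⋃ n, Set.Ioo (c n) (d n)) ∧
    ∃ s : F, s < ε ∧ SeqConv (fun N => ∑ k ∈ Finset.range N, (d k - c k)) s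

/-- `Q` holds almost everywhere in `[a,b]`. -/
def AEOn (a b : F) (Q : F → Prop) : Prop :=
  NullSet a b {x ∈ Set.Icc a b | ¬ Q x}

/-- `φ` is a monotonically decreasing sequence of step functions `[a,b] → P ∪ {0}`
converging to `f` almost everywhere in `[a,b]`. -/
def ApproxSeq (a b : F) (φ : ℕ → F → F) (f : F → F) : Prop :=
  (∀ n, IsStepOn a b (φ n)) ∧
  (∀ n, ∀ x ∈ Set.Icc a b, 0 ≤ φ n x) ∧
  (∀ n, ∀ x ∈ Set.Icc a b, φ (n + 1) x ≤ φ n x) ∧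
  AEOn a b fun x => SeqConv (fun n => φ n x) (f x)

/-- A nonnegative-valued function on `[a,b]` is Lebesgue measurable. -/
def LebMeasurableNN (a b : F) (f : F → F) : Prop :=
  ∃ φ : ℕ → F → F, ApproxSeq a b φ f

/-- A nonnegative-valued function on `[a,b]` has Lebesgue integral `I`:
it is Lebesgue measurable and for every monotonically decreasing sequence of
nonnegative step functions converging to `f` a.e., the sequence of their
(step) integrals converges to `I`. -/
def HasLebIntegralNN (a b : F) (f : F → F) (I : F) : Prop :=
  LebMeasurableNN a b f ∧
    ∀ φ : ℕ → F → F, ApproxSeq a b φ f →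
      ∀ J : ℕ → F, (∀ n, HasStepIntegral a b (φ n) (J n)) → SeqConv J I

/-- A function `[a,b] → F` is Lebesgue measurable (via its nonnegative parts). -/
def LebMeasurable (a b : F) (f : F → F) : Prop :=
  LebMeasurableNN a b (fun x => max (f x) 0) ∧ LebMeasurableNN a b fun x => max (-f x) 0

/-- A function `[a,b] → F` has a Lebesgue integral (via its nonnegative parts). -/
def HasLebIntegral (a b : F) (f : F → F) : Prop :=
  (∃ I : F, HasLebIntegralNN a b (fun x => max (f x) 0) I) ∧
  ∃ I : F, HasLebIntegralNN a b (fun x => max (-f x) 0) I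

/-- The characteristic function of `E`. -/
noncomputable def chi (E : Set F) : F → F := E.indicator fun _ => 1

/-- `E ⊆ [a,b]` is a measurable set: its characteristic function is Lebesgue measurable. -/
def MeasSet (a b : F) (E : Set F) : Prop := LebMeasurableNN a b (chi E)

/-- `E` has Lebesgue measure: `E` has measure zero or `χ_E` has a Lebesgue integral. -/
def HasLebMeasure (a b : F) (E : Set F) : Prop :=
  NullSet a b E ∨ ∃ I : F, HasLebIntegralNN a b (chi E) I

/-- `S` is an interval with endpoints `c ≤ d` (any of the four kinds). -/
def IsIntervalWith (S : Set F) (c d : F) : Prop :=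
  S = Set.Icc c d ∨ S = Set.Ico c d ∨ S = Set.Ioc c d ∨ S = Set.Ioo c d

/-- `S` is an interval. -/
def IsInterval (S : Set F) : Prop := ∃ c d : F, IsIntervalWith S c d

/-- `f` is continuous on `D`. -/
def ContOn (D : Set F) (f : F → F) : Prop :=
  ∀ c ∈ D, ∀ ε : F, 0 < ε → ∃ δ : F, 0 < δ ∧
    ∀ x ∈ D ∩ Set.Ioo (c - δ) (c + δ), f x - f c ∈ Set.Ioo (-ε) ε

/-- The functions `g n` converge uniformly to `f` on `D`. -/
def UnifConvOn (D : Set F) (g : ℕ → F → F) (f : F → F) : Prop :=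
  ∀ ε : F, 0 < ε → ∃ N : ℕ, ∀ n, N ≤ n → ∀ x ∈ D, f x - g n x ∈ Set.Ioo (-ε) ε

/-- `A` is a cut of `F`. -/
def IsCut (A : Set F) : Prop :=
  A.Nonempty ∧ A ≠ Set.univ ∧ ∀ x ∈ A, ∀ y ∉ A, x < y

/-- `c` is a cut point of `A`. -/
def IsCutPoint (A : Set F) (c : F) : Prop :=
  ∀ x ∈ A, ∀ y ∉ A, x ≤ c ∧ c ≤ y

variable (F) in
/-- The Cut Axiom: every cut of `F` has a cut point. -/
def CutAxiom : Prop := ∀ A : Set F, IsCut A → ∃ c : F, IsCutPoint A c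

variable (F) in
/-- Lebesgue Integral Property. -/
def LIP : Prop :=
  ∀ a b : F, a ≤ b → ∀ f : F → F, LebMeasurable a b f → HasLebIntegral a b f

variable (F) in
/-- Lebesgue Measure Property. -/
def LMP : Prop :=
  ∀ a b : F, a ≤ b → ∀ E ⊆ Set.Icc a b, MeasSet a b E → HasLebMeasure a b E

variable (F) in
/-- Littlewood's First Principle. -/
def LP1 : Prop :=
  ∀ a b : F, a ≤ b → ∀ E ⊆ Set.Icc a b, MeasSet a b E → ∀ ε : F, 0 < ε →
    ∃ (m : ℕ) (I : ℕ → Set F), (∀ i < m, IsInterval (I i) ∧ I i ⊆ Set.Icc a b) ∧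
      ∃ J : F, HasLebIntegralNN a b
        (chi ((E \ ⋃ i < m, I i) ∪ ((⋃ i < m, I i) \ E))) J ∧ J < ε

variable (F) in
/-- Littlewood's Second Principle. -/
def LP2 : Prop :=
  ∀ a b : F, a ≤ b → ∀ f : F → F, LebMeasurable a b f → ∀ ε : F, 0 < ε →
    ∃ E ⊆ Set.Icc a b, MeasSet a b E ∧ ContOn (Set.Icc a b \ E) f ∧
      ∃ J : F, HasLebIntegralNN a b (chi E) J ∧ J < ε

variable (F) in
/-- Littlewood's Third Principle. -/
def LP3 : Prop :=
  ∀ a b : F, a ≤ b → ∀ φ : ℕ → F → F, (∀ n, LebMeasurable a b (φ n)) →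
    ∀ f : F → F, AEOn a b (fun x => SeqConv (fun n => φ n x) (f x)) →
    ∀ ε : F, 0 < ε →
      ∃ E ⊆ Set.Icc a b, MeasSet a b E ∧ UnifConvOn (Set.Icc a b \ E) φ f ∧
        ∃ J : F, HasLebIntegralNN a b (chi E) J ∧ J < ε

end Littlewood

/-!
A Dedekind complete ordered field is Archimedean, hence isomorphic to `ℝ` as an ordered field,
and the Lebesgue measure property is invariant under such isomorphisms. On `ℝ` the step integrals
of any decreasing sequence of step functions converging a.e. to `χ_E` converge, by dominated
convergence, to the Lebesgue integral of `χ_E`.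

Conversely, let `u` be decreasing and bounded below by `m`. The set `E = ⋂ n, [m - 1, u n]` is
approximated by the `χ_[m - 1, u n]`. It contains the left endpoint `m - 1`, which no open
interval inside `[m - 1, u 0 + 1]` does, so `E` is not null; thus the integrals `u n - (m - 1)`
converge. So the Lebesgue measure property makes bounded decreasing sequences converge, which
rules out infinitely large elements (take `u n = -n`) and, by bisection, fills every gap.
-/

namespace Littlewood

open Set

section LinearOrder

variable {F : Type*} [LinearOrder F]

theorem IsCut.lt {A : Set F} (hA : IsCut A) {x y : F} (hx : x ∈ A) (hy : y ∉ A) : x < y :=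
  hA.2.2 x hx y hy

theorem IsCutPoint.le_of_mem {A : Set F} {c x : F} (hc : IsCutPoint A c) (hA : IsCut A)
    (hx : x ∈ A) : x ≤ c := by
  obtain ⟨y, hy⟩ := (ne_univ_iff_exists_notMem A).1 hA.2.1
  exact (hc x hx y hy).1

theorem IsCutPoint.le_of_notMem {A : Set F} {c y : F} (hc : IsCutPoint A c) (hA : IsCut A)
    (hy : y ∉ A) : c ≤ y := by
  obtain ⟨x, hx⟩ := hA.1
  exact (hc x hx y hy).2

end LinearOrder

section Field

variable {F : Type*} [Field F] [LinearOrder F]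

theorem SeqConv.add_const {s : ℕ → F} {L : F} (h : SeqConv s L) (c : F) :
    SeqConv (fun n => s n + c) (L + c) := fun ε hε => by
  simpa only [add_sub_add_right_eq_sub] using h ε hε

theorem NullSet.mono {a b : F} {S T : Set F} (hT : NullSet a b T) (hST : S ⊆ T) :
    NullSet a b S := fun ε hε => by
  obtain ⟨c, d, hcd, hcover, hsum⟩ := hT ε hε
  exact ⟨c, d, hcd, hST.trans hcover, hsum⟩

theorem AEOn.mono {a b : F} {Q Q' : F → Prop} (h : AEOn a b Q)
    (hQ : ∀ x ∈ Icc a b, Q x → Q' x) : AEOn a b Q' :=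
  NullSet.mono h fun x hx => ⟨hx.1, fun hQx => hx.2 (hQ x hx.1 hQx)⟩

theorem HasStepIntegral.isStepOn {a b I : F} {φ : F → F} (h : HasStepIntegral a b φ I) :
    IsStepOn a b φ := by
  obtain ⟨n, x, M, hx0, hxn, hx, hM, -⟩ := h
  exact ⟨n, x, hx0, hxn, hx, fun i hi => ⟨M i, hM i hi⟩⟩

theorem IsStepOn.exists_hasStepIntegral {a b : F} {φ : F → F} (h : IsStepOn a b φ) :
    ∃ I, HasStepIntegral a b φ I := by
  obtain ⟨n, x, hx0, hxn, hx, hM⟩ := h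
  choose! M hM using hM
  exact ⟨_, n, x, M, hx0, hxn, hx, hM, rfl⟩

theorem hasStepIntegral_chi_Icc {a b c : F} (hac : a < c) (hcb : c < b) :
    HasStepIntegral a b (chi (Icc a c)) (c - a) := by
  refine ⟨2, fun i => if i = 0 then a else if i = 1 then c else b,
    fun i => if i = 0 then 1 else 0, rfl, rfl, ?_, ?_, ?_⟩
  · intro i hi
    interval_cases i <;> simpa
  · intro i hi t ht
    interval_cases i
    · simp only [ite_true] at ht ⊢
      exact indicator_of_mem (Ioo_subset_Icc_self ht) _
    · simp only [one_ne_zero, ite_false, ite_true] at ht ⊢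
      exact indicator_of_notMem (fun h => (h.2.trans_lt ht.1).false) _
  · simp

end Field

section Transport

variable {F K : Type*} [Field F] [LinearOrder F] [Field K] [LinearOrder K] (e : F ≃+*o K)

theorem symm_mem_Ioo_iff {x y : F} {z : K} : e.symm z ∈ Ioo x y ↔ z ∈ Ioo (e x) (e y) := by
  simp only [mem_Ioo, ← map_lt_map_iff e, OrderRingIso.apply_symm_apply]

theorem symm_mem_Icc_iff {x y : F} {z : K} : e.symm z ∈ Icc x y ↔ z ∈ Icc (e x) (e y) := by
  simp only [mem_Icc, ← map_le_map_iff e, OrderRingIso.apply_symm_apply]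

theorem SeqConv.map {s : ℕ → F} {L : F} (h : SeqConv s L) :
    SeqConv (fun n => e (s n)) (e L) := by
  intro ε hε
  obtain ⟨N, hN⟩ := h (e.symm ε) (by simpa using (map_lt_map_iff e.symm).2 hε)
  refine ⟨N, fun n hn => ?_⟩
  have hsymm : e.symm (e (s n) - e L) ∈ Ioo (-e.symm ε) (e.symm ε) := by
    simpa only [map_sub, OrderRingIso.symm_apply_apply] using hN n hn
  simpa only [map_neg, OrderRingIso.apply_symm_apply] using (symm_mem_Ioo_iff e).1 hsymm

theorem seqConv_map_iff {s : ℕ → F} {L : F} :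
    SeqConv (fun n => e (s n)) (e L) ↔ SeqConv s L :=
  ⟨fun h => by simpa using h.map e.symm, fun h => h.map e⟩

theorem NullSet.map {a b : F} {S : Set F} (h : NullSet a b S) :
    NullSet (e a) (e b) (e.symm ⁻¹' S) := by
  intro ε hε
  obtain ⟨c, d, hcd, hcover, s, hs, hsum⟩ :=
    h (e.symm ε) (by simpa using (map_lt_map_iff e.symm).2 hε)
  refine ⟨fun n => e (c n), fun n => e (d n), fun n => ⟨(map_le_map_iff e).2 (hcd n).1, ?_⟩, ?_,
    e s, by simpa using (map_lt_map_iff e).2 hs,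
    by simpa [← map_sub, ← map_sum] using hsum.map e⟩
  · intro z hz
    exact (symm_mem_Icc_iff e).1 ((hcd n).2 ((symm_mem_Ioo_iff e).2 hz))
  · intro z hz
    obtain ⟨n, hn⟩ := mem_iUnion.1 (hcover hz)
    exact mem_iUnion.2 ⟨n, (symm_mem_Ioo_iff e).1 hn⟩

theorem AEOn.map {a b : F} {Q : F → Prop} (h : AEOn a b Q) :
    AEOn (e a) (e b) fun z => Q (e.symm z) :=
  NullSet.mono (NullSet.map e h) fun _ hz => ⟨(symm_mem_Icc_iff e).2 hz.1, hz.2⟩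

theorem HasStepIntegral.map {a b I : F} {φ : F → F} (h : HasStepIntegral a b φ I) :
    HasStepIntegral (e a) (e b) (fun z => e (φ (e.symm z))) (e I) := by
  obtain ⟨n, x, M, hx0, hxn, hx, hM, rfl⟩ := h
  refine ⟨n, fun i => e (x i), fun i => e (M i), congrArg e hx0, congrArg e hxn,
    fun i hi => (map_lt_map_iff e).2 (hx i hi), fun i hi z hz => ?_, by simp⟩
  exact congrArg e (hM i hi _ ((symm_mem_Ioo_iff e).2 hz))

theorem IsStepOn.map {a b : F} {φ : F → F} (h : IsStepOn a b φ) :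
    IsStepOn (e a) (e b) fun z => e (φ (e.symm z)) :=
  let ⟨_, hI⟩ := h.exists_hasStepIntegral
  (hI.map e).isStepOn

theorem ApproxSeq.map {a b : F} {φ : ℕ → F → F} {f : F → F} (h : ApproxSeq a b φ f) :
    ApproxSeq (e a) (e b) (fun n z => e (φ n (e.symm z))) fun z => e (f (e.symm z)) := by
  obtain ⟨hstep, hnonneg, hanti, hconv⟩ := h
  refine ⟨fun n => (hstep n).map e, fun n z hz => ?_, fun n z hz => ?_,
    (hconv.map e).mono fun z _ => (seqConv_map_iff e).2⟩
  · simpa using (map_le_map_iff e).2 (hnonneg n _ ((symm_mem_Icc_iff e).2 hz))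
  · exact (map_le_map_iff e).2 (hanti n _ ((symm_mem_Icc_iff e).2 hz))

theorem chi_map (E : Set F) : (fun z => e (chi E (e.symm z))) = chi (e.symm ⁻¹' E) := by
  ext z
  by_cases hz : e.symm z ∈ E <;> simp [chi, hz]

theorem LMP.of_orderRingIso [IsStrictOrderedRing F] [IsStrictOrderedRing K] (e : F ≃+*o K)
    (h : LMP K) : LMP F := by
  intro a b hab E hE ⟨φ, hφ⟩
  have hmap {ψ} (hψ : ApproxSeq a b ψ (chi E)) := chi_map e E ▸ hψ.map e
  have hE' : e.symm ⁻¹' E ⊆ Icc (e a) (e b) := fun z hz => (symm_mem_Icc_iff e).1 (hE hz)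
  rcases h _ _ ((map_le_map_iff e).2 hab) _ hE' ⟨_, hmap hφ⟩ with hnull | ⟨I, -, hI⟩
  · left
    simpa [preimage_preimage] using hnull.map e.symm
  · refine Or.inr ⟨e.symm I, ⟨φ, hφ⟩, fun ψ hψ J hJ => ?_⟩
    simpa using (hI _ (hmap hψ) _ fun n => (hJ n).map e).map e.symm

end Transport

section Real

open MeasureTheory Filter Topology

theorem seqConv_iff_tendsto {s : ℕ → ℝ} {L : ℝ} : SeqConv s L ↔ Tendsto s atTop (𝓝 L) := by
  simp only [Metric.tendsto_atTop, Real.dist_eq, abs_lt, SeqConv, mem_Ioo, ge_iff_le]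

theorem NullSet.volume_eq_zero {a b : ℝ} {S : Set ℝ} (h : NullSet a b S) : volume S = 0 := by
  refine nonpos_iff_eq_zero.1 (ENNReal.le_of_forall_pos_le_add fun ε hε _ => ?_)
  obtain ⟨c, d, hcd, hcover, s, hs, hsum⟩ := h ε (mod_cast hε)
  have hlen n : 0 ≤ d n - c n := sub_nonneg.2 (hcd n).1
  have hS : HasSum (fun n => d n - c n) s :=
    (hasSum_iff_tendsto_nat_of_nonneg hlen s).2 (seqConv_iff_tendsto.1 hsum)
  calc volume S ≤ ∑' n, volume (Ioo (c n) (d n)) :=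
        (measure_mono hcover).trans (measure_iUnion_le _)
    _ = ENNReal.ofReal s := by
      simp only [Real.volume_Ioo, ← ENNReal.ofReal_tsum_of_nonneg hlen hS.summable, hS.tsum_eq]
    _ ≤ 0 + ε := by
      rw [zero_add, ← ENNReal.ofReal_coe_nnreal]
      exact ENNReal.ofReal_le_ofReal hs.le

theorem AEOn.ae {a b : ℝ} {Q : ℝ → Prop} (h : AEOn a b Q) : ∀ᵐ x, x ∈ Icc a b → Q x := by
  filter_upwards [measure_eq_zero_iff_ae_notMem.1 (NullSet.volume_eq_zero h)] with x hx hmem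
  by_contra hQ
  exact hx ⟨hmem, hQ⟩

theorem intervalIntegrable_and_integral_of_eqOn_Ioo {x y M : ℝ} {φ : ℝ → ℝ} (hxy : x ≤ y)
    (h : ∀ t ∈ Ioo x y, φ t = M) :
    IntervalIntegrable φ volume x y ∧ ∫ t in x..y, φ t = M * (y - x) := by
  have hae : ∀ᵐ t, t ∈ uIoc x y → φ t = M := by
    filter_upwards [Measure.ae_ne volume y] with t hty ht
    rw [uIoc_of_le hxy] at ht
    exact h t ⟨ht.1, ht.2.lt_of_ne hty⟩
  refine ⟨intervalIntegrable_const.congr_ae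
    (EventuallyEq.symm ((ae_restrict_iff' measurableSet_uIoc).2 hae)), ?_⟩
  rw [intervalIntegral.integral_congr_ae hae, intervalIntegral.integral_const, smul_eq_mul,
    mul_comm]

theorem HasStepIntegral.intervalIntegrable_and_integral_eq {a b I : ℝ} {φ : ℝ → ℝ}
    (h : HasStepIntegral a b φ I) :
    IntervalIntegrable φ volume a b ∧ ∫ t in a..b, φ t = I := by
  obtain ⟨n, x, M, rfl, rfl, hx, hM, rfl⟩ := h
  have hpiece i (hi : i < n) := intervalIntegrable_and_integral_of_eqOn_Ioo (hx i hi).le (hM i hi)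
  refine ⟨IntervalIntegrable.trans_iterate fun i hi => (hpiece i hi).1, ?_⟩
  rw [← intervalIntegral.sum_integral_adjacent_intervals fun i hi => (hpiece i hi).1]
  exact Finset.sum_congr rfl fun i hi => (hpiece i (Finset.mem_range.1 hi)).2

theorem lmp_real : LMP ℝ := by
  intro a b hab E _ hE
  refine Or.inr ⟨∫ t in a..b, chi E t, hE, fun φ hφ J hJ => ?_⟩
  obtain ⟨-, hnonneg, hanti, hconv⟩ := hφ
  have hint n := (hJ n).intervalIntegrable_and_integral_eq
  have hIoc : uIoc a b ⊆ Icc a b := uIoc_of_le hab ▸ Ioc_subset_Icc_self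
  rw [seqConv_iff_tendsto, funext fun n => (hint n).2.symm]
  refine intervalIntegral.tendsto_integral_filter_of_dominated_convergence (φ 0)
    (Eventually.of_forall fun n => (hint n).1.aestronglyMeasurable_restrict_uIoc)
    (Eventually.of_forall fun n => ae_of_all _ fun t ht => ?_) (hint 0).1 ?_
  · rw [Real.norm_eq_abs, abs_of_nonneg (hnonneg n t (hIoc ht))]
    exact antitone_nat_of_succ_le (f := fun k => φ k t) (fun k => hanti k t (hIoc ht))
      (Nat.zero_le n)
  · filter_upwards [hconv.ae] with t ht ht'
    exact seqConv_iff_tendsto.1 (ht (hIoc ht'))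

end Real

section OrderedField

variable {F : Type*} [Field F] [LinearOrder F] [IsStrictOrderedRing F]

theorem seqConv_of_eventually_eq {s : ℕ → F} {L : F} (N : ℕ) (h : ∀ n ≥ N, s n = L) :
    SeqConv s L := fun ε hε =>
  ⟨N, fun n hn => by rw [h n hn, sub_self]; exact ⟨neg_neg_iff_pos.2 hε, hε⟩⟩

theorem SeqConv.le_of_forall_le {s : ℕ → F} {L x : F} (h : SeqConv s L) (hs : ∀ n, x ≤ s n) :
    x ≤ L := by
  by_contra! hL
  obtain ⟨N, hN⟩ := h (x - L) (sub_pos.2 hL)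
  linarith [(hN N le_rfl).2, hs N]

theorem SeqConv.le_of_antitone {s : ℕ → F} {L : F} (h : SeqConv s L) (hs : Antitone s)
    (m : ℕ) : L ≤ s m := by
  by_contra! hL
  obtain ⟨N, hN⟩ := h (L - s m) (sub_pos.2 hL)
  linarith [(hN (max N m) (le_max_left _ _)).1, hs (le_max_right N m)]

theorem seqConv_chi_iInter {s : ℕ → Set F} (hs : Antitone s) (x : F) :
    SeqConv (fun n => chi (s n) x) (chi (⋂ n, s n) x) := by
  by_cases hx : x ∈ ⋂ n, s n
  · refine seqConv_of_eventually_eq 0 fun n _ => ?_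
    simp only [chi, indicator_of_mem hx, indicator_of_mem (mem_iInter.1 hx n)]
  · obtain ⟨N, hN⟩ := not_forall.1 (mt mem_iInter.2 hx)
    refine seqConv_of_eventually_eq N fun n hn => ?_
    simp only [chi, indicator_of_notMem hx, indicator_of_notMem fun hn' => hN (hs hn hn')]

theorem nullSet_empty (a b : F) : NullSet a b ∅ := fun ε hε =>
  ⟨fun _ => a, fun _ => a, fun _ => ⟨le_rfl, by simp⟩, empty_subset _, 0, hε,
    seqConv_of_eventually_eq 0 fun n _ => by simp⟩

theorem NullSet.left_notMem {a b : F} {S : Set F} (h : NullSet a b S) : a ∉ S := by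
  intro haS
  obtain ⟨c, d, hcd, hcover, -⟩ := h 1 one_pos
  obtain ⟨n, hn⟩ := mem_iUnion.1 (hcover haS)
  have := ((hcd n).2 ⟨left_lt_add_div_two.2 hn.1, by linarith [hn.1, hn.2]⟩).1
  linarith [hn.1]

theorem aeOn_of_forall {a b : F} {Q : F → Prop} (h : ∀ x ∈ Icc a b, Q x) : AEOn a b Q :=
  (nullSet_empty a b).mono fun x hx => hx.2 (h x hx.1)

theorem approxSeq_chi_iInter {a b : F} {s : ℕ → Set F} (hs : Antitone s)
    (hstep : ∀ n, IsStepOn a b (chi (s n))) :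
    ApproxSeq a b (fun n => chi (s n)) (chi (⋂ n, s n)) :=
  ⟨hstep, fun _ _ _ => indicator_nonneg (fun _ _ => zero_le_one) _,
    fun n _ _ => indicator_le_indicator_of_subset (hs n.le_succ) (fun _ => zero_le_one) _,
    aeOn_of_forall fun x _ => seqConv_chi_iInter hs x⟩

variable (F) in
def AntitoneConvergence : Prop :=
  ∀ u : ℕ → F, Antitone u → BddBelow (range u) → ∃ L, SeqConv u L

theorem LMP.antitoneConvergence (h : LMP F) : AntitoneConvergence F := by
  rintro u hu ⟨m, hm⟩
  have hau : ∀ n, m - 1 < u n := fun n => by linarith [hm ⟨n, rfl⟩]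
  have hub : ∀ n, u n < u 0 + 1 := fun n => by linarith [hu (Nat.zero_le n)]
  have hstep n := hasStepIntegral_chi_Icc (hau n) (hub n)
  have hIcc : Antitone fun n => Icc (m - 1) (u n) := fun _ _ hmn => Icc_subset_Icc_right (hu hmn)
  have happrox := approxSeq_chi_iInter hIcc fun n => (hstep n).isStepOn
  have hsub : (⋂ n, Icc (m - 1) (u n)) ⊆ Icc (m - 1) (u 0 + 1) :=
    (iInter_subset _ 0).trans (Icc_subset_Icc_right (hub 0).le)
  rcases h _ _ ((hau 0).trans (hub 0)).le _ hsub ⟨_, happrox⟩ with hnull | ⟨I, -, hI⟩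
  · exact (hnull.left_notMem (mem_iInter.2 fun n => ⟨le_rfl, (hau n).le⟩)).elim
  · exact ⟨I + (m - 1), by simpa using (hI _ happrox _ hstep).add_const (m - 1)⟩

theorem AntitoneConvergence.archimedean (h : AntitoneConvergence F) : Archimedean F := by
  refine archimedean_iff_nat_lt.2 fun x => ?_
  by_contra! hx
  obtain ⟨L, hL⟩ := h (fun n => -(n : F)) (fun m n hmn => by simpa using hmn)
    ⟨-x, forall_mem_range.2 fun n => neg_le_neg (hx n)⟩
  obtain ⟨N, hN⟩ := hL 1 one_pos
  have h₁ := (hN N le_rfl).2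
  have h₂ := (hN (N + 2) (by omega)).1
  push_cast at h₁ h₂
  linarith

open Classical in
noncomputable def bisect (A : Set F) (p : F × F) : F × F :=
  if (p.1 + p.2) / 2 ∈ A then ((p.1 + p.2) / 2, p.2) else (p.1, (p.1 + p.2) / 2)

theorem IsCut.bisect_spec {A : Set F} (hA : IsCut A) {p : F × F} (h₁ : p.1 ∈ A)
    (h₂ : p.2 ∉ A) :
    (bisect A p).1 ∈ A ∧ (bisect A p).2 ∉ A ∧
      (bisect A p).2 - (bisect A p).1 = (p.2 - p.1) / 2 ∧ (bisect A p).2 ≤ p.2 := by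
  have := hA.lt h₁ h₂
  unfold bisect
  split_ifs with hmid
  · exact ⟨hmid, h₂, by ring, le_rfl⟩
  · exact ⟨h₁, hmid, by ring, by linarith⟩

theorem IsCut.exists_bisection {A : Set F} (hA : IsCut A) :
    ∃ l r : ℕ → F, (∀ n, l n ∈ A) ∧ (∀ n, r n ∉ A) ∧ Antitone r ∧
      ∀ n, r n - l n = (r 0 - l 0) / 2 ^ n := by
  obtain ⟨a, ha⟩ := hA.1
  obtain ⟨b, hb⟩ := (ne_univ_iff_exists_notMem A).1 hA.2.1
  set p : ℕ → F × F := fun n => (bisect A)^[n] (a, b)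
  have hp_succ n : p (n + 1) = bisect A (p n) := Function.iterate_succ_apply' _ n _
  have hp : ∀ n, (p n).1 ∈ A ∧ (p n).2 ∉ A ∧ (p n).2 - (p n).1 = (b - a) / 2 ^ n := by
    intro n
    induction n with
    | zero => exact ⟨ha, hb, by simp [p]⟩
    | succ n ih =>
      obtain ⟨h₁, h₂, hw, -⟩ := hA.bisect_spec ih.1 ih.2.1
      rw [hp_succ, hw, ih.2.2, pow_succ, div_div]
      exact ⟨h₁, h₂, rfl⟩
  refine ⟨fun n => (p n).1, fun n => (p n).2, fun n => (hp n).1, fun n => (hp n).2.1,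
    antitone_nat_of_succ_le fun n => ?_, fun n => by simpa [p] using (hp n).2.2⟩
  rw [hp_succ]
  exact (hA.bisect_spec (hp n).1 (hp n).2.1).2.2.2

theorem AntitoneConvergence.cutAxiom (h : AntitoneConvergence F) : CutAxiom F := by
  intro A hA
  have := h.archimedean
  obtain ⟨l, r, hl, hr, hanti, hwidth⟩ := hA.exists_bisection
  obtain ⟨c, hc⟩ := h r hanti ⟨l 0, forall_mem_range.2 fun n => (hA.lt (hl 0) (hr n)).le⟩
  refine ⟨c, fun x hx y hy => ⟨hc.le_of_forall_le fun n => (hA.lt hx (hr n)).le, ?_⟩⟩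
  by_contra! hyc
  obtain ⟨n, hn⟩ := pow_unbounded_of_one_lt ((r 0 - l 0) / (c - y)) one_lt_two
  rw [div_lt_iff₀ (sub_pos.2 hyc), ← div_lt_iff₀' (by positivity)] at hn
  linarith [hc.le_of_antitone hanti n, hwidth n, hA.lt (hl n) hy]

theorem CutAxiom.archimedean (h : CutAxiom F) : Archimedean F := by
  refine archimedean_iff_nat_lt.2 fun x => ?_
  by_contra! hx
  let A : Set F := {y | ∃ n : ℕ, y < n}
  have hA : IsCut A := by
    refine ⟨⟨0, 1, by simp⟩, fun hA => ?_, fun y ⟨n, hn⟩ z hz => ?_⟩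
    · obtain ⟨n, hn⟩ : x ∈ A := hA ▸ mem_univ x
      exact (hx n).not_gt hn
    · exact hn.trans_le (not_lt.1 fun h => hz ⟨n, h⟩)
  -- the cut point `c` of `A` bounds `ℕ` from above, and then so does `c - 1`
  obtain ⟨c, hc⟩ := h A hA
  have hc' : c - 1 ∉ A := fun ⟨n, hn⟩ =>
    (hc.le_of_mem hA (⟨n + 2, by push_cast; linarith⟩ : (n + 1 : F) ∈ A)).not_gt (by linarith)
  linarith [hc.le_of_notMem hA hc']

open ConditionallyCompleteLinearOrderedField in
theorem CutAxiom.surjective_inducedOrderRingHom [Archimedean F] (h : CutAxiom F) :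
    Function.Surjective (inducedOrderRingHom F ℝ) := by
  set ρ := inducedOrderRingHom F ℝ
  have hρ : StrictMono ρ :=
    (OrderHomClass.mono ρ).strictMono_of_injective (ρ : F →+* ℝ).injective
  have hρq (q : ℚ) : ρ q = q := map_ratCast ρ q
  intro r
  let A : Set F := {z | ρ z < r}
  have hA : IsCut A := by
    refine ⟨?_, ?_, fun z hz w hw => hρ.lt_iff_lt.1 (hz.trans_le (not_lt.1 hw))⟩
    · obtain ⟨q, hq⟩ := exists_rat_lt r
      exact ⟨q, show ρ q < r by rwa [hρq]⟩
    · obtain ⟨q, hq⟩ := exists_rat_gt r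
      exact ne_univ_iff_exists_notMem _ |>.2 ⟨q, show ¬ ρ q < r by rw [hρq]; exact hq.not_gt⟩
  obtain ⟨c, hc⟩ := h A hA
  refine ⟨c, le_antisymm (le_of_forall_lt_rat_imp_le fun q hq => ?_)
    (le_of_forall_rat_lt_imp_le fun q hq => ?_)⟩
  · have hqA : (q : F) ∉ A := by simpa [A, hρq] using hq.le
    simpa [hρq] using hρ.monotone (hc.le_of_notMem hA hqA)
  · have hqA : (q : F) ∈ A := by simpa [A, hρq] using hq
    simpa [hρq] using hρ.monotone (hc.le_of_mem hA hqA)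

open ConditionallyCompleteLinearOrderedField in
noncomputable def CutAxiom.orderRingIsoReal (h : CutAxiom F) : F ≃+*o ℝ :=
  have := h.archimedean
  have hinj := (inducedOrderRingHom F ℝ : F →+* ℝ).injective
  { RingEquiv.ofBijective _ ⟨hinj, h.surjective_inducedOrderRingHom⟩ with
    map_le_map_iff' :=
      ((OrderHomClass.mono (inducedOrderRingHom F ℝ)).strictMono_of_injective hinj).le_iff_le }

theorem cutAxiom_iff_lebesgueMeasureProperty (F : Type*) [Field F] [LinearOrder F] [IsStrictOrderedRing F] :
    CutAxiom F ↔ LMP F :=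
  ⟨fun h => lmp_real.of_orderRingIso h.orderRingIsoReal, fun h => h.antitoneConvergence.cutAxiom⟩

end OrderedField

end Littlewood
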